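/- arXiv:2207.14372 — 8 statements merged into one kernel-verified Lean document; each statement's English description precedes it below -/
import Mathlib

section
/- If μ̂(X) is auto-calibrated for Y, then for every convex function ψ: ℝ → ℝ such that the relevant expectations exist, E[ψ(μ̂(X))] ≤ E[ψ(μ†(X))], where μ†(X) = E[Y | X]. That is, the true regression function dominates any auto-calibrated regression function in convex order. -/
open MeasureTheory ProbabilityTheory

/-! Since `μ̂(X)` is a function of `X`, the tower property and auto-calibration give
`E[μ†(X) | μ̂(X)] = E[Y | μ̂(X)] = μ̂(X)`. Conditional Jensen then yields
`ψ(μ̂(X)) ≤ E[ψ(μ†(X)) | μ̂(X)]`, and taking expectations gives the claim. -/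

theorem ConvexOn.integral_map_condExp_le {Ω : Type*} {m mΩ : MeasurableSpace Ω}
    {P : Measure Ω} [IsFiniteMeasure P] {f : Ω → ℝ} {ψ : ℝ → ℝ}
    (hm : m ≤ mΩ) (hψ : ConvexOn ℝ Set.univ ψ) (hf : Integrable f P)
    (hψ_condExp : Integrable (fun ω => ψ (P[f | m] ω)) P)
    (hψf : Integrable (fun ω => ψ (f ω)) P) :
    ∫ ω, ψ (P[f | m] ω) ∂P ≤ ∫ ω, ψ (f ω) ∂P :=
  calc ∫ ω, ψ (P[f | m] ω) ∂P ≤ ∫ ω, P[ψ ∘ f | m] ω ∂P :=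
        integral_mono_ae hψ_condExp integrable_condExp
          (hψ.map_condExp_le_of_finiteDimensional hm hf hψf)
    _ = ∫ ω, ψ (f ω) ∂P := integral_condExp hm

theorem MeasurableSpace.comap_comp_le {α β γ : Type*} [mβ : MeasurableSpace β]
    [mγ : MeasurableSpace γ] {X : α → β} {g : β → γ} (hg : Measurable g) :
    mγ.comap (g ∘ X) ≤ mβ.comap X := by
  rw [← MeasurableSpace.comap_comp]
  exact MeasurableSpace.comap_mono hg.comap_le

theorem true_regression_dominates_convex_order_general
    {Ω E : Type*} [MeasurableSpace Ω] [MeasurableSpace E]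
    (P : Measure Ω) [IsProbabilityMeasure P]
    (X : Ω → E) (Y : Ω → ℝ) (μhat : E → ℝ)
    (hX : Measurable X) (hμhat : Measurable μhat)
    (μdag : Ω → ℝ)
    (hμdag : μdag = P[Y | MeasurableSpace.comap X inferInstance])
    (hauto : P[Y | MeasurableSpace.comap (fun ω => μhat (X ω)) Real.measurableSpace]
      =ᵐ[P] fun ω => μhat (X ω))
    (ψ : ℝ → ℝ) (hψ : ConvexOn ℝ Set.univ ψ)
    (hint1 : Integrable (fun ω => ψ (μhat (X ω))) P)
    (hint2 : Integrable (fun ω => ψ (μdag ω)) P) :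
    (∫ ω, ψ (μhat (X ω)) ∂P) ≤ ∫ ω, ψ (μdag ω) ∂P := by
  subst hμdag
  have hle : MeasurableSpace.comap (fun ω => μhat (X ω)) Real.measurableSpace
      ≤ MeasurableSpace.comap X inferInstance :=
    MeasurableSpace.comap_comp_le hμhat
  have hcalib : P[P[Y | MeasurableSpace.comap X inferInstance] |
      MeasurableSpace.comap (fun ω => μhat (X ω)) Real.measurableSpace]
      =ᵐ[P] fun ω => μhat (X ω) :=
    (condExp_condExp_of_le hle hX.comap_le).trans hauto
  have hψ_calib := hcalib.fun_comp ψ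
  calc (∫ ω, ψ (μhat (X ω)) ∂P) = ∫ ω, ψ (P[P[Y | MeasurableSpace.comap X inferInstance] |
        MeasurableSpace.comap (fun ω => μhat (X ω)) Real.measurableSpace] ω) ∂P :=
        integral_congr_ae hψ_calib.symm
    _ ≤ _ := hψ.integral_map_condExp_le (hle.trans hX.comap_le) integrable_condExp
        (hint1.congr hψ_calib.symm) hint2

/-- If `μ̂(X)` is auto-calibrated for `Y`, then for every convex `ψ : ℝ → ℝ` for which the
relevant expectations exist, `E[ψ(μ̂(X))] ≤ E[ψ(μ†(X))]` where `μ†(X) = E[Y | X]`: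
the true regression function dominates any auto-calibrated one in convex order. -/
theorem true_regression_dominates_convex_order
    {Ω E : Type*} [MeasurableSpace Ω] [MeasurableSpace E]
    (P : Measure Ω) [IsProbabilityMeasure P]
    (X : Ω → E) (Y : Ω → ℝ) (μhat : E → ℝ)
    (hX : Measurable X) (hμhat : Measurable μhat) (hY : Integrable Y P)
    (μdag : Ω → ℝ)
    (hμdag : μdag = P[Y | MeasurableSpace.comap X inferInstance])
    (hauto : P[Y | MeasurableSpace.comap (fun ω => μhat (X ω)) Real.measurableSpace]
      =ᵐ[P] fun ω => μhat (X ω))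
    (ψ : ℝ → ℝ) (hψ : ConvexOn ℝ Set.univ ψ)
    (hint1 : Integrable (fun ω => ψ (μhat (X ω))) P)
    (hint2 : Integrable (fun ω => ψ (μdag ω)) P) :
    (∫ ω, ψ (μhat (X ω)) ∂P) ≤ ∫ ω, ψ (μdag ω) ∂P :=
  true_regression_dominates_convex_order_general P X Y μhat hX hμhat μdag hμdag hauto ψ hψ hint1
    hint2
end

section
/- If μ̂(X) is auto-calibrated for Y and E[ψ(μ̂(X))] = E[ψ(μ†(X))] for all convex functions ψ (whenever the expectations exist), then μ̂(X) = μ†(X) almost surely, where μ†(X) = E[Y | X]. -/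
/-!
Write `m` for the σ-algebra generated by `W = μ̂(X)`, and `Z = μ†`; by the tower property
`E[Z | m] = W`. Let `A = {W ≤ c}`, an `m`-measurable set. Since `(W - c)⁺ = (W - c) 1_{Aᶜ}`,
`E[(W - c)⁺] = E[(Z - c) 1_{Aᶜ}] ≤ E[(Z - c)⁺] - E[(Z - c)⁺ 1_A]`, so equality of the
integrals `E[(· - c)⁺]` forces `Z ≤ c` a.e. on `A`. Letting `c` run through the
rationals gives `Z ≤ W` a.e., and since `E[Z] = E[W]` the two agree a.e.
-/

open MeasureTheory ProbabilityTheory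

section

variable {Ω : Type*} {m m₀ : MeasurableSpace Ω} {μ : Measure Ω} {Z W : Ω → ℝ}

theorem ae_le_of_forall_ae_le_imp_le (h : ∀ c : ℝ, ∀ᵐ ω ∂μ, W ω ≤ c → Z ω ≤ c) :
    Z ≤ᵐ[μ] W := by
  filter_upwards [ae_all_iff.mpr fun q : ℚ => h q] with ω hω
  by_contra! hlt
  obtain ⟨q, hWq, hqZ⟩ := exists_rat_btwn hlt
  exact (hω q hWq.le).not_gt hqZ

variable [IsFiniteMeasure μ]

theorem ae_le_of_condExp_eq_of_integral_posPart_le (hm : m ≤ m₀) (hZ : Integrable Z μ)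
    (hW : Measurable[m] W) (hZW : μ[Z | m] =ᵐ[μ] W) (c : ℝ)
    (hc : ∫ ω, max (Z ω - c) 0 ∂μ ≤ ∫ ω, max (W ω - c) 0 ∂μ) :
    ∀ᵐ ω ∂μ, W ω ≤ c → Z ω ≤ c := by
  set A := {ω | W ω ≤ c}
  have hAm : MeasurableSet[m] A := hW measurableSet_Iic
  have hA : MeasurableSet A := hm _ hAm
  have hW_int : Integrable W μ := integrable_condExp.congr hZW
  have hZc_int : Integrable (fun ω => max (Z ω - c) 0) μ :=
    (hZ.sub (integrable_const c)).pos_part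
  have hWc : ∫ ω, max (W ω - c) 0 ∂μ = ∫ ω in Aᶜ, (W ω - c) ∂μ := by
    rw [← integral_indicator hA.compl]
    congr with ω
    by_cases hω : W ω ≤ c
    · simp [A, hω]
    · simp [A, hω, (not_le.mp hω).le]
  have hZW_compl : ∫ ω in Aᶜ, (Z ω - c) ∂μ = ∫ ω in Aᶜ, (W ω - c) ∂μ := by
    rw [integral_sub hZ.integrableOn (integrable_const c).integrableOn,
      integral_sub hW_int.integrableOn (integrable_const c).integrableOn,
      ← setIntegral_condExp hm hZ hAm.compl,
      setIntegral_congr_ae hA.compl (hZW.mono fun _ h _ => h)]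
  have hA_zero : ∫ ω in A, max (Z ω - c) 0 ∂μ ≤ 0 := by
    have hsplit := integral_add_compl hA hZc_int
    have hcompl : ∫ ω in Aᶜ, (Z ω - c) ∂μ ≤ ∫ ω in Aᶜ, max (Z ω - c) 0 ∂μ :=
      setIntegral_mono (hZ.sub (integrable_const c)).integrableOn hZc_int.integrableOn
        fun ω => le_max_left _ _
    linarith
  have hA_eq : (fun ω => max (Z ω - c) 0) =ᵐ[μ.restrict A] 0 :=
    (integral_eq_zero_iff_of_nonneg (fun ω => le_max_right _ _) hZc_int.integrableOn).mp
      (le_antisymm hA_zero (setIntegral_nonneg hA fun ω _ => le_max_right _ _))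
  filter_upwards [(ae_restrict_iff' hA).mp hA_eq] with ω hω hωA
  simpa [sub_nonpos] using hω hωA

theorem ae_eq_of_condExp_eq_of_integral_posPart_le (hm : m ≤ m₀) (hZ : Integrable Z μ)
    (hW : Measurable[m] W) (hZW : μ[Z | m] =ᵐ[μ] W)
    (h : ∀ c : ℝ, ∫ ω, max (Z ω - c) 0 ∂μ ≤ ∫ ω, max (W ω - c) 0 ∂μ) :
    Z =ᵐ[μ] W := by
  have hZ_le_W : Z ≤ᵐ[μ] W := ae_le_of_forall_ae_le_imp_le fun c =>
    ae_le_of_condExp_eq_of_integral_posPart_le hm hZ hW hZW c (h c)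
  refine (integral_eq_iff_of_ae_le hZ (integrable_condExp.congr hZW) hZ_le_W).mp ?_
  rw [← integral_congr_ae hZW, integral_condExp hm]

end

theorem convexOn_max_sub_const_zero (c : ℝ) :
    ConvexOn ℝ Set.univ fun x : ℝ => max (x - c) 0 :=
  ((convexOn_id convex_univ).sub (concaveOn_const c convex_univ)).sup
    (convexOn_const 0 convex_univ)

theorem convex_order_equality_implies_ae_eq_general
    {Ω E : Type*} [MeasurableSpace Ω] [MeasurableSpace E]
    (P : Measure Ω) [IsProbabilityMeasure P]
    (X : Ω → E) (Y : Ω → ℝ) (μhat : E → ℝ)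
    (hX : Measurable X) (hμhat : Measurable μhat)
    (μdag : Ω → ℝ)
    (hμdag : μdag = P[Y | MeasurableSpace.comap X inferInstance])
    (hauto : P[Y | MeasurableSpace.comap (fun ω => μhat (X ω)) Real.measurableSpace]
      =ᵐ[P] fun ω => μhat (X ω))
    (heq : ∀ ψ : ℝ → ℝ, ConvexOn ℝ Set.univ ψ →
      Integrable (fun ω => ψ (μhat (X ω))) P → Integrable (fun ω => ψ (μdag ω)) P →
      (∫ ω, ψ (μhat (X ω)) ∂P) = ∫ ω, ψ (μdag ω) ∂P) :
    (fun ω => μhat (X ω)) =ᵐ[P] μdag := by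
  have hσ : MeasurableSpace.comap (fun ω => μhat (X ω)) Real.measurableSpace ≤
      MeasurableSpace.comap X inferInstance :=
    (hμhat.comp (comap_measurable X)).comap_le
  have hμdag_int : Integrable μdag P := hμdag ▸ integrable_condExp
  have hμhat_int : Integrable (fun ω => μhat (X ω)) P := integrable_condExp.congr hauto
  have hcalib : P[μdag | MeasurableSpace.comap (fun ω => μhat (X ω)) Real.measurableSpace]
      =ᵐ[P] fun ω => μhat (X ω) :=
    hμdag ▸ (condExp_condExp_of_le hσ hX.comap_le).trans hauto
  refine (ae_eq_of_condExp_eq_of_integral_posPart_le (hσ.trans hX.comap_le) hμdag_int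
    (comap_measurable _) hcalib fun c => (heq _ (convexOn_max_sub_const_zero c) ?_ ?_).ge).symm
  · exact (hμhat_int.sub (integrable_const c)).pos_part
  · exact (hμdag_int.sub (integrable_const c)).pos_part

/-- If `μ̂(X)` is auto-calibrated for `Y` and `E[ψ(μ̂(X))] = E[ψ(μ†(X))]` for all convex `ψ`
(whenever the expectations exist), then `μ̂(X) = μ†(X)` almost surely. -/
theorem convex_order_equality_implies_ae_eq
    {Ω E : Type*} [MeasurableSpace Ω] [MeasurableSpace E]
    (P : Measure Ω) [IsProbabilityMeasure P]
    (X : Ω → E) (Y : Ω → ℝ) (μhat : E → ℝ)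
    (hX : Measurable X) (hμhat : Measurable μhat) (hY : Integrable Y P)
    (μdag : Ω → ℝ)
    (hμdag : μdag = P[Y | MeasurableSpace.comap X inferInstance])
    (hauto : P[Y | MeasurableSpace.comap (fun ω => μhat (X ω)) Real.measurableSpace]
      =ᵐ[P] fun ω => μhat (X ω))
    (heq : ∀ ψ : ℝ → ℝ, ConvexOn ℝ Set.univ ψ →
      Integrable (fun ω => ψ (μhat (X ω))) P → Integrable (fun ω => ψ (μdag ω)) P →
      (∫ ω, ψ (μhat (X ω)) ∂P) = ∫ ω, ψ (μdag ω) ∂P) :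
    (fun ω => μhat (X ω)) =ᵐ[P] μdag :=
  convex_order_equality_implies_ae_eq_general P X Y μhat hX hμhat μdag hμdag hauto heq
end

section
/- For any convex differentiable function ψ and any regression function μ̂(X) auto-calibrated for Y, the true regression function μ†(X) = E[Y | X] forecast-dominates μ̂: E[−D_ψ(Y, μ†(X))] ≥ E[−D_ψ(Y, μ̂(X))], where D_ψ(y, m) = ψ(y) − ψ(m) − ψ'(m)(y − m) is the Bregman divergence. -/
/-!
The conditional mean `P[Y | m]` minimises the expected Bregman divergence among all
`m`-measurable forecasts `f`. Pointwise, the three-point identity gives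
`D(Y, f) - D(Y, P[Y|m]) = D(P[Y|m], f) + (ψ'(P[Y|m]) - ψ'(f)) (Y - P[Y|m])`; the first term is
nonnegative by convexity, and the second has zero mean because its first factor is
`m`-measurable while `Y - P[Y|m]` has zero conditional mean. That factor need not be bounded,
so the zero-mean claim is made on the `m`-measurable sets where it is, and one passes to the
limit.
-/

open MeasureTheory

noncomputable def bregmanDiv (ψ : ℝ → ℝ) (y m : ℝ) : ℝ :=
  ψ y - ψ m - deriv ψ m * (y - m)

lemma bregmanDiv_nonneg {ψ : ℝ → ℝ} (hψ : ConvexOn ℝ Set.univ ψ) {m : ℝ}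
    (hdiff : DifferentiableAt ℝ ψ m) (y : ℝ) : 0 ≤ bregmanDiv ψ y m := by
  unfold bregmanDiv
  rcases lt_trichotomy y m with hym | rfl | hmy
  · have hslope := hψ.slope_le_deriv (Set.mem_univ y) (Set.mem_univ m) hym hdiff
    rw [slope_def_field, div_le_iff₀ (sub_pos.mpr hym)] at hslope
    linarith
  · simp
  · have hslope := hψ.deriv_le_slope (Set.mem_univ m) (Set.mem_univ y) hmy hdiff
    rw [slope_def_field, le_div_iff₀ (sub_pos.mpr hmy)] at hslope
    linarith

lemma bregmanDiv_sub_bregmanDiv (ψ : ℝ → ℝ) (y a b : ℝ) :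
    bregmanDiv ψ y b - bregmanDiv ψ y a =
      bregmanDiv ψ a b + (deriv ψ a - deriv ψ b) * (y - a) := by
  unfold bregmanDiv
  ring

section CondExp

variable {Ω : Type*} {m m0 : MeasurableSpace Ω} {P : Measure Ω}

lemma condExp_sub_condExp_self (hm : m ≤ m0) [SigmaFinite (P.trim hm)] {Y : Ω → ℝ}
    (hY : Integrable Y P) : P[Y - P[Y | m] | m] =ᵐ[P] 0 := by
  filter_upwards [condExp_sub hY integrable_condExp m] with ω hω
  rw [hω, condExp_of_stronglyMeasurable hm stronglyMeasurable_condExp integrable_condExp]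
  simp

lemma integral_mul_eq_zero_of_condExp_eq_zero (hm : m ≤ m0) [IsFiniteMeasure P]
    {B Z : Ω → ℝ} (hB : StronglyMeasurable[m] B) {C : ℝ} (hBC : ∀ ω, ‖B ω‖ ≤ C)
    (hZ : Integrable Z P) (hZm : P[Z | m] =ᵐ[P] 0) : ∫ ω, B ω * Z ω ∂P = 0 := by
  have hpull : P[B * Z | m] =ᵐ[P] 0 := by
    filter_upwards [condExp_stronglyMeasurable_mul_of_bound hm hB hZ C (.of_forall hBC), hZm]
      with ω hpull hzero
    simp [hpull, hzero]
  calc ∫ ω, B ω * Z ω ∂P = ∫ ω, P[B * Z | m] ω ∂P := (integral_condExp hm).symm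
    _ = 0 := by rw [integral_congr_ae hpull, integral_zero']

lemma integral_nonneg_of_condExp_eq_zero_of_mul_le (hm : m ≤ m0) [IsFiniteMeasure P] {B Z h : Ω → ℝ}
    (hB : StronglyMeasurable[m] B) (hZ : Integrable Z P) (hZm : P[Z | m] =ᵐ[P] 0)
    (hh : Integrable h P) (hBZ : ∀ ω, B ω * Z ω ≤ h ω) : 0 ≤ ∫ ω, h ω ∂P := by
  set s : ℕ → Set Ω := fun n => {ω | ‖B ω‖ ≤ n}
  have hs_meas : ∀ n, MeasurableSet[m] (s n) := fun n =>
    hB.norm.measurable measurableSet_Iic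
  have hs_mono : Monotone s := fun i j hij ω (hω : ‖B ω‖ ≤ i) =>
    hω.trans (Nat.cast_le.mpr hij)
  have hs_univ : ⋃ n, s n = Set.univ :=
    Set.eq_univ_of_forall fun ω => Set.mem_iUnion.mpr (exists_nat_ge ‖B ω‖)
  have htrunc : ∀ n, 0 ≤ ∫ ω in s n, h ω ∂P := by
    intro n
    have hBn_bdd : ∀ ω, ‖(s n).indicator B ω‖ ≤ n := fun ω => by
      by_cases hω : ω ∈ s n
      · rw [Set.indicator_of_mem hω]
        exact hω
      · simp [hω]
    have hBn := hB.indicator (hs_meas n)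
    calc (0 : ℝ) = ∫ ω, (s n).indicator B ω * Z ω ∂P :=
          (integral_mul_eq_zero_of_condExp_eq_zero hm hBn hBn_bdd hZ hZm).symm
      _ ≤ ∫ ω, (s n).indicator h ω ∂P := by
          refine integral_mono (hZ.bdd_mul (hBn.mono hm).aestronglyMeasurable
            (.of_forall hBn_bdd)) (hh.indicator (hm _ (hs_meas n))) fun ω => ?_
          by_cases hω : ω ∈ s n
          · simpa [hω] using hBZ ω
          · simp [hω]
      _ = ∫ ω in s n, h ω ∂P := integral_indicator (hm _ (hs_meas n))
  have hlim := tendsto_setIntegral_of_monotone (fun n => hm _ (hs_meas n)) hs_mono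
    (by rw [hs_univ]; exact hh.integrableOn)
  rw [hs_univ, setIntegral_univ] at hlim
  exact ge_of_tendsto' hlim htrunc

theorem integral_bregmanDiv_condExp_le (hm : m ≤ m0) [IsFiniteMeasure P] {ψ : ℝ → ℝ}
    (hψ : ConvexOn ℝ Set.univ ψ) (hdiff : Differentiable ℝ ψ) {Y f : Ω → ℝ}
    (hY : Integrable Y P) (hf : StronglyMeasurable[m] f)
    (hint_condExp : Integrable (fun ω => bregmanDiv ψ (Y ω) (P[Y | m] ω)) P)
    (hint_f : Integrable (fun ω => bregmanDiv ψ (Y ω) (f ω)) P) :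
    ∫ ω, bregmanDiv ψ (Y ω) (P[Y | m] ω) ∂P ≤ ∫ ω, bregmanDiv ψ (Y ω) (f ω) ∂P := by
  rw [← sub_nonneg, ← integral_sub hint_f hint_condExp]
  have hB : StronglyMeasurable[m] fun ω => deriv ψ (P[Y | m] ω) - deriv ψ (f ω) :=
    ((measurable_deriv ψ).comp stronglyMeasurable_condExp.measurable
      |>.sub ((measurable_deriv ψ).comp hf.measurable)).stronglyMeasurable
  refine integral_nonneg_of_condExp_eq_zero_of_mul_le hm hB (hY.sub integrable_condExp)
    (condExp_sub_condExp_self hm hY) (hint_f.sub hint_condExp) fun ω => ?_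
  rw [bregmanDiv_sub_bregmanDiv]
  exact le_add_of_nonneg_left (bregmanDiv_nonneg hψ (hdiff _) _)

end CondExp

theorem bregman_forecast_dominance_general
    {Ω E : Type*} [MeasurableSpace Ω] [MeasurableSpace E]
    (P : Measure Ω) [IsProbabilityMeasure P]
    (X : Ω → E) (Y : Ω → ℝ) (μhat : E → ℝ)
    (hX : Measurable X) (hμhat : Measurable μhat) (hY : Integrable Y P)
    (μdag : Ω → ℝ)
    (hμdag : μdag = P[Y | MeasurableSpace.comap X inferInstance])
    (ψ : ℝ → ℝ) (hψ : ConvexOn ℝ Set.univ ψ) (hdiff : Differentiable ℝ ψ)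
    (D : ℝ → ℝ → ℝ) (hD : ∀ y m, D y m = ψ y - ψ m - deriv ψ m * (y - m))
    (hint1 : Integrable (fun ω => D (Y ω) (μdag ω)) P)
    (hint2 : Integrable (fun ω => D (Y ω) (μhat (X ω))) P) :
    (∫ ω, -D (Y ω) (μdag ω) ∂P) ≥ ∫ ω, -D (Y ω) (μhat (X ω)) ∂P := by
  obtain rfl : D = bregmanDiv ψ := funext₂ hD
  subst hμdag
  have hforecast : StronglyMeasurable[MeasurableSpace.comap X inferInstance] (μhat ∘ X) :=
    (hμhat.comp (comap_measurable X)).stronglyMeasurable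
  rw [ge_iff_le, integral_neg, integral_neg, neg_le_neg_iff]
  exact integral_bregmanDiv_condExp_le hX.comap_le hψ hdiff hY hforecast hint1 hint2

/-- For convex differentiable `ψ` and auto-calibrated `μ̂(X)`, the true regression function
`μ†(X) = E[Y | X]` forecast-dominates `μ̂`:
`E[−D_ψ(Y, μ†(X))] ≥ E[−D_ψ(Y, μ̂(X))]`, with Bregman divergence
`D_ψ(y, m) = ψ(y) − ψ(m) − ψ'(m)(y − m)`. -/
theorem bregman_forecast_dominance
    {Ω E : Type*} [MeasurableSpace Ω] [MeasurableSpace E]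
    (P : Measure Ω) [IsProbabilityMeasure P]
    (X : Ω → E) (Y : Ω → ℝ) (μhat : E → ℝ)
    (hX : Measurable X) (hμhat : Measurable μhat) (hY : Integrable Y P)
    (μdag : Ω → ℝ)
    (hμdag : μdag = P[Y | MeasurableSpace.comap X inferInstance])
    (hauto : P[Y | MeasurableSpace.comap (fun ω => μhat (X ω)) Real.measurableSpace]
      =ᵐ[P] fun ω => μhat (X ω))
    (ψ : ℝ → ℝ) (hψ : ConvexOn ℝ Set.univ ψ) (hdiff : Differentiable ℝ ψ)
    (D : ℝ → ℝ → ℝ) (hD : ∀ y m, D y m = ψ y - ψ m - deriv ψ m * (y - m))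
    (hint1 : Integrable (fun ω => D (Y ω) (μdag ω)) P)
    (hint2 : Integrable (fun ω => D (Y ω) (μhat (X ω))) P) :
    (∫ ω, -D (Y ω) (μdag ω) ∂P) ≥ ∫ ω, -D (Y ω) (μhat (X ω)) ∂P :=
  bregman_forecast_dominance_general P X Y μhat hX hμhat hY μdag hμdag ψ hψ hdiff D hD hint1 hint2
end

section
/- Suppose μ̂(X) has continuous distribution F_{μ̂(X)} and Y ≥ 0 is integrable with E[Y] > 0. Then the integral of the cumulative accuracy profile satisfies ∫₀¹ CAP_{Y,μ̂(X)}(α) dα = E[Y · F_{μ̂(X)}(μ̂(X))] / E[Y], where CAP_{Y,μ̂(X)}(α) = E[Y · 1{μ̂(X) > F⁻¹_{μ̂(X)}(1−α)}] / E[Y]. -/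
/-!
For `β ∈ (0, 1)` and continuous `F`, the events `{F⁻¹(β) < μ̂}` and `{β < F(μ̂)}` differ
only where `F(μ̂) = β`. In the variables `(α, ω)` this exceptional set is null for the
product of Lebesgue measure on `(0, 1)` and `P`, because its `α`-sections are single points.
So by Fubini `∫₀¹ CAP = E[Y · ∫₀¹ 1{1 - α < F(μ̂)} dα] / E[Y]`, and the inner integral is
`F(μ̂)`.
-/

open MeasureTheory ProbabilityTheory Filter Set Topology

section GeneralizedInverse

variable {F : ℝ → ℝ} {β x : ℝ}

lemma nonempty_setOf_le_of_tendsto_atTop (hF : Tendsto F atTop (𝓝 1)) (hβ : β < 1) :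
    {t | β ≤ F t}.Nonempty :=
  let ⟨t, ht⟩ := (hF.eventually_const_lt hβ).exists
  ⟨t, ht.le⟩

lemma bddBelow_setOf_le_of_tendsto_atBot (hF : Tendsto F atBot (𝓝 0))
    (hβ : 0 < β) : BddBelow {t | β ≤ F t} := by
  obtain ⟨a, ha⟩ := eventually_atBot.1 (hF.eventually_lt_const hβ)
  refine ⟨a, fun t (ht : β ≤ F t) => ?_⟩
  by_contra! hta
  exact (ha t hta.le).not_ge ht

lemma le_of_sInf_setOf_le_lt (hmono : Monotone F) (hbdd : BddBelow {t | β ≤ F t})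
    (hne : {t | β ≤ F t}.Nonempty) (h : sInf {t | β ≤ F t} < x) : β ≤ F x := by
  obtain ⟨t, ht, htx⟩ := (csInf_lt_iff hbdd hne).1 h
  exact ht.trans (hmono htx.le)

lemma sInf_setOf_le_lt_of_lt (hcont : ContinuousWithinAt F (Iic x) x)
    (hbdd : BddBelow {t | β ≤ F t}) (h : β < F x) : sInf {t | β ≤ F t} < x := by
  have hev : ∀ᶠ t in 𝓝[<] x, β < F t :=
    nhdsWithin_mono x Iio_subset_Iic_self (hcont.eventually_const_lt h)
  obtain ⟨t, ht, htx⟩ := (hev.and self_mem_nhdsWithin).exists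
  exact (csInf_le hbdd ht.le).trans_lt htx

lemma sInf_setOf_le_lt_iff (hmono : Monotone F)
    (hcont : ContinuousWithinAt F (Iic x) x) (hbot : Tendsto F atBot (𝓝 0))
    (htop : Tendsto F atTop (𝓝 1)) (hβ0 : 0 < β) (hβ1 : β < 1)
    (hx : F x ≠ β) : sInf {t | β ≤ F t} < x ↔ β < F x := by
  have hbdd := bddBelow_setOf_le_of_tendsto_atBot hbot hβ0
  exact ⟨fun h => (le_of_sInf_setOf_le_lt hmono hbdd
    (nonempty_setOf_le_of_tendsto_atTop htop hβ1) h).lt_of_ne' hx,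
    sInf_setOf_le_lt_of_lt hcont hbdd⟩

end GeneralizedInverse

lemma integral_Ioo_ite_one_sub_lt {z : ℝ} (h0 : 0 ≤ z) (h1 : z ≤ 1) :
    ∫ α in Ioo (0 : ℝ) 1, (if 1 - α < z then (1 : ℝ) else 0) = z := by
  have : (fun α : ℝ => if 1 - α < z then (1 : ℝ) else 0) = (Ioi (1 - z)).indicator 1 := by
    ext α; simp [indicator_apply, sub_lt_comm]
  rw [this, integral_indicator_one measurableSet_Ioi,
    measureReal_restrict_apply measurableSet_Ioi, Ioi_inter_Ioo, max_eq_left (by linarith),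
    Real.volume_real_Ioo_of_le (by linarith)]
  ring

lemma ae_prod_fst_ne {α Ω : Type*} [MeasurableSpace α] [MeasurableSpace Ω]
    [MeasurableEq α] {μ : Measure α} {P : Measure Ω} [NullSingletonClass μ] [SFinite μ]
    [SFinite P] {h : Ω → α} (hh : Measurable h) : ∀ᵐ p ∂μ.prod P, p.1 ≠ h p.2 := by
  have hmeas : MeasurableSet {p : α × Ω | p.1 ≠ h p.2} :=
    (measurableSet_eq_fun measurable_fst (hh.comp measurable_snd)).compl
  rw [Measure.ae_prod_iff_ae_ae hmeas, Measure.ae_ae_comm hmeas]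
  exact ae_of_all _ fun ω => μ.ae_ne (h ω)

lemma integral_Ioo_integral_mul_ite_of_ae_iff {Ω : Type*} [MeasurableSpace Ω]
    {P : Measure Ω} [IsFiniteMeasure P] {Y Z : Ω → ℝ} {S : ℝ → Ω → Prop}
    [∀ α ω, Decidable (S α ω)]
    (hY : Integrable Y P) (hZ : Measurable Z) (hZ0 : ∀ ω, 0 ≤ Z ω) (hZ1 : ∀ ω, Z ω ≤ 1)
    (hS : ∀ᵐ p ∂(volume.restrict (Ioo (0 : ℝ) 1)).prod P, S p.1 p.2 ↔ 1 - p.1 < Z p.2) :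
    ∫ α in Ioo (0 : ℝ) 1, ∫ ω, Y ω * (if S α ω then 1 else 0) ∂P = ∫ ω, Y ω * Z ω ∂P := by
  set μ := volume.restrict (Ioo (0 : ℝ) 1)
  set g : ℝ × Ω → ℝ := fun p => Y p.2 * if 1 - p.1 < Z p.2 then 1 else 0
  have hfg : (fun p : ℝ × Ω => Y p.2 * if S p.1 p.2 then 1 else 0) =ᵐ[μ.prod P] g := by
    filter_upwards [hS] with p hp
    simp only [g, if_congr hp rfl rfl]
  have hg : Integrable g (μ.prod P) := by
    refine (hY.comp_snd μ).mul_bdd (c := 1) ?_ (ae_of_all _ fun p => ?_)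
    · exact (Measurable.ite (measurableSet_lt (by fun_prop) (hZ.comp measurable_snd))
        measurable_const measurable_const).aestronglyMeasurable
    · split_ifs <;> simp
  calc ∫ α in Ioo (0 : ℝ) 1, ∫ ω, Y ω * (if S α ω then 1 else 0) ∂P
      = ∫ p, g p ∂μ.prod P := by
        rw [← integral_congr_ae hfg, integral_prod _ (hg.congr hfg.symm)]
    _ = ∫ ω, (∫ α in Ioo (0 : ℝ) 1, g (α, ω)) ∂P := integral_prod_symm g hg
    _ = ∫ ω, Y ω * Z ω ∂P := by
        congr 1 with ω
        rw [integral_const_mul (μ := volume.restrict _) (Y ω),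
          integral_Ioo_ite_one_sub_lt (hZ0 ω) (hZ1 ω)]

theorem integral_CAP_eq_general
    {Ω : Type*} [MeasurableSpace Ω] (P : Measure Ω) [IsProbabilityMeasure P]
    (M Y : Ω → ℝ) (hM : Measurable M) (hY : Integrable Y P)
    (F : ℝ → ℝ) (hF : ∀ t, F t = (P {ω | M ω ≤ t}).toReal) (hcont : Continuous F)
    (Finv : ℝ → ℝ) (hFinv : ∀ α, Finv α = sInf {t : ℝ | α ≤ F t})
    (CAP : ℝ → ℝ)
    (hCAP : ∀ α, CAP α =
      (∫ ω, Y ω * (if Finv (1 - α) < M ω then (1 : ℝ) else 0) ∂P) / ∫ ω, Y ω ∂P) :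
    (∫ α in Set.Ioo (0 : ℝ) 1, CAP α) =
      (∫ ω, Y ω * F (M ω) ∂P) / ∫ ω, Y ω ∂P := by
  have : IsProbabilityMeasure (P.map M) := Measure.isProbabilityMeasure_map hM.aemeasurable
  have hFcdf : F = cdf (P.map M) := funext fun t => by
    rw [hF, cdf_eq_real, measureReal_def, Measure.map_apply hM measurableSet_Iic]; rfl
  have hFM : Measurable fun ω => F (M ω) := hcont.measurable.comp hM
  have hthreshold : ∀ᵐ p ∂(volume.restrict (Ioo (0 : ℝ) 1)).prod P,
      Finv (1 - p.1) < M p.2 ↔ 1 - p.1 < F (M p.2) := by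
    filter_upwards [Measure.quasiMeasurePreserving_fst.ae (ae_restrict_mem measurableSet_Ioo),
      ae_prod_fst_ne (h := fun ω => 1 - F (M ω)) (measurable_const.sub hFM)]
      with p hp hne
    rw [hFinv, hFcdf]
    exact sInf_setOf_le_lt_iff (monotone_cdf _) (hFcdf ▸ hcont).continuousWithinAt
      (tendsto_cdf_atBot _) (tendsto_cdf_atTop _) (by linarith [hp.2]) (by linarith [hp.1])
      fun h => hne (by rw [hFcdf]; linarith)
  simp_rw [hCAP]
  rw [integral_div, integral_Ioo_integral_mul_ite_of_ae_iff hY hFM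
    (fun _ => hFcdf ▸ cdf_nonneg _ _) (fun _ => hFcdf ▸ cdf_le_one _ _) hthreshold]

/-- If `μ̂(X)` has continuous distribution function `F` and `Y ≥ 0` is integrable with
`E[Y] > 0`, then `∫₀¹ CAP_{Y,μ̂(X)}(α) dα = E[Y · F(μ̂(X))]/E[Y]`, where
`CAP(α) = E[Y · 1{μ̂(X) > F⁻¹(1−α)}]/E[Y]`. -/
theorem integral_CAP_eq
    {Ω : Type*} [MeasurableSpace Ω] (P : Measure Ω) [IsProbabilityMeasure P]
    (M Y : Ω → ℝ) (hM : Measurable M) (hY : Integrable Y P)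
    (hYpos : ∀ ω, 0 ≤ Y ω) (hEY : 0 < ∫ ω, Y ω ∂P)
    (F : ℝ → ℝ) (hF : ∀ t, F t = (P {ω | M ω ≤ t}).toReal) (hcont : Continuous F)
    (Finv : ℝ → ℝ) (hFinv : ∀ α, Finv α = sInf {t : ℝ | α ≤ F t})
    (CAP : ℝ → ℝ)
    (hCAP : ∀ α, CAP α =
      (∫ ω, Y ω * (if Finv (1 - α) < M ω then (1 : ℝ) else 0) ∂P) / ∫ ω, Y ω ∂P) :
    (∫ α in Set.Ioo (0 : ℝ) 1, CAP α) =
      (∫ ω, Y ω * F (M ω) ∂P) / ∫ ω, Y ω ∂P :=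
  integral_CAP_eq_general P M Y hM hY F hF hcont Finv hFinv CAP hCAP
end

section
/- If μ̂(X) is auto-calibrated for Y and has continuous distribution F_{μ̂(X)}, then for all α ∈ (0,1), CAP_{Y,μ̂(X)}(α) = 1 − L_{μ̂(X)}(F⁻¹_{μ̂(X)}(1−α)), i.e., the cumulative accuracy profile equals the mirrored Lorenz curve of μ̂(X). -/
/-!
Auto-calibration `E[Y | μ̂(X)] = μ̂(X)` means that `Y` and `μ̂(X)` have the same integral over
every event determined by `μ̂(X)`, in particular over the whole space and over the lower level
set `{μ̂(X) ≤ t}`. Hence the mass of `Y` above any threshold `t` is the total mass of `μ̂(X)`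
minus the Lorenz mass of `μ̂(X)` below `t`; taking `t = F⁻¹(1 − α)` gives the identity.
-/

open MeasureTheory ProbabilityTheory

section

variable {Ω : Type*} {m m₀ : MeasurableSpace Ω} {μ : Measure Ω}

theorem integral_mul_ite_eq_setIntegral (f : Ω → ℝ) {p : Ω → Prop} [DecidablePred p]
    (hp : MeasurableSet {ω | p ω}) :
    ∫ ω, f ω * (if p ω then (1 : ℝ) else 0) ∂μ = ∫ ω in {ω | p ω}, f ω ∂μ := by
  simp_rw [mul_ite, mul_one, mul_zero]
  rw [← integral_indicator hp]
  simp only [Set.indicator_apply, Set.mem_ofPred_eq]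

theorem setIntegral_eq_of_condExp_ae_eq (hm : m ≤ m₀) [SigmaFinite (μ.trim hm)]
    {f g : Ω → ℝ} (hf : Integrable f μ) (hfg : μ[f | m] =ᵐ[μ] g) {s : Set Ω}
    (hs : MeasurableSet[m] s) : ∫ ω in s, g ω ∂μ = ∫ ω in s, f ω ∂μ := by
  rw [← setIntegral_condExp hm hf hs]
  exact setIntegral_congr_ae (hm s hs) (hfg.mono fun ω h _ => h.symm)

theorem integral_eq_of_condExp_ae_eq (hm : m ≤ m₀) [SigmaFinite (μ.trim hm)]
    {f g : Ω → ℝ} (hf : Integrable f μ) (hfg : μ[f | m] =ᵐ[μ] g) :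
    ∫ ω, g ω ∂μ = ∫ ω, f ω ∂μ := by
  simpa only [setIntegral_univ] using
    setIntegral_eq_of_condExp_ae_eq hm hf hfg MeasurableSet.univ

end

theorem CAP_eq_mirrored_Lorenz_of_auto_calibrated_general
    {Ω : Type*} [MeasurableSpace Ω] (P : Measure Ω) [IsProbabilityMeasure P]
    (M Y : Ω → ℝ) (hM : Measurable M) (hY : Integrable Y P)
    (hEY : 0 < ∫ ω, Y ω ∂P)
    (hauto : P[Y | MeasurableSpace.comap M Real.measurableSpace] =ᵐ[P] M)
    (Finv : ℝ → ℝ)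
    (CAP : ℝ → ℝ)
    (hCAP : ∀ α, CAP α =
      (∫ ω, Y ω * (if Finv (1 - α) < M ω then (1 : ℝ) else 0) ∂P) / ∫ ω, Y ω ∂P)
    (L : ℝ → ℝ)
    (hL : ∀ t, L t = (∫ ω, M ω * (if M ω ≤ t then (1 : ℝ) else 0) ∂P) / ∫ ω, M ω ∂P) :
    ∀ α ∈ Set.Ioo (0 : ℝ) 1, CAP α = 1 - L (Finv (1 - α)) := by
  intro α _
  set t := Finv (1 - α)
  have hm := hM.comap_le
  have hlower : MeasurableSet[MeasurableSpace.comap M Real.measurableSpace] {ω | M ω ≤ t} :=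
    ⟨Set.Iic t, measurableSet_Iic, rfl⟩
  have hupper : {ω | t < M ω} = {ω | M ω ≤ t}ᶜ := by
    ext ω
    simp
  rw [hCAP, hL, integral_mul_ite_eq_setIntegral _ (hm _ hlower),
    integral_mul_ite_eq_setIntegral _ (measurableSet_lt measurable_const hM), hupper,
    setIntegral_compl (hm _ hlower) hY, setIntegral_eq_of_condExp_ae_eq hm hY hauto hlower,
    integral_eq_of_condExp_ae_eq hm hY hauto, sub_div, div_self hEY.ne']

/-- If `μ̂(X)` is auto-calibrated for `Y` and has continuous distribution, then for all
`α ∈ (0,1)`, `CAP_{Y,μ̂(X)}(α) = 1 − L_{μ̂(X)}(F⁻¹(1−α))`: the cumulative accuracy profile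
equals the mirrored Lorenz curve of `μ̂(X)`. -/
theorem CAP_eq_mirrored_Lorenz_of_auto_calibrated
    {Ω : Type*} [MeasurableSpace Ω] (P : Measure Ω) [IsProbabilityMeasure P]
    (M Y : Ω → ℝ) (hM : Measurable M) (hY : Integrable Y P)
    (hYpos : ∀ ω, 0 ≤ Y ω) (hEY : 0 < ∫ ω, Y ω ∂P)
    (hauto : P[Y | MeasurableSpace.comap M Real.measurableSpace] =ᵐ[P] M)
    (F : ℝ → ℝ) (hF : ∀ t, F t = (P {ω | M ω ≤ t}).toReal) (hcont : Continuous F)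
    (Finv : ℝ → ℝ) (hFinv : ∀ α, Finv α = sInf {t : ℝ | α ≤ F t})
    (CAP : ℝ → ℝ)
    (hCAP : ∀ α, CAP α =
      (∫ ω, Y ω * (if Finv (1 - α) < M ω then (1 : ℝ) else 0) ∂P) / ∫ ω, Y ω ∂P)
    (L : ℝ → ℝ)
    (hL : ∀ t, L t = (∫ ω, M ω * (if M ω ≤ t then (1 : ℝ) else 0) ∂P) / ∫ ω, M ω ∂P) :
    ∀ α ∈ Set.Ioo (0 : ℝ) 1, CAP α = 1 - L (Finv (1 - α)) :=
  CAP_eq_mirrored_Lorenz_of_auto_calibrated_general P M Y hM hY hEY hauto Finv CAP hCAP L hL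
end

section
/- Let μ̂(X) be auto-calibrated for Y and let μ†(X) = E[Y|X]. Let Z be an independent copy of X. Then E[|μ̂(X) − μ̂(Z)|] ≤ E[|μ†(X) − μ†(Z)|], i.e., the economic Gini numerator is maximized by the true regression function among auto-calibrated regression functions. -/
open MeasureTheory ProbabilityTheory

/-! Auto-calibration and the tower property give `μ̂(X) = E[μ†(X) | μ̂(X)]`, so by conditional
Jensen `E|μ̂(X) - c| ≤ E|μ†(X) - c|` for every constant `c`. Integrating this first in `Z`
(with `c = μ̂(X)`) and then in `X` (with `c = μ†(Z)`) over the product law of `(X, Z)` yields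
`E|μ̂(X) - μ̂(Z)| ≤ E|μ̂(X) - μ†(Z)| ≤ E|μ†(X) - μ†(Z)|`. -/

section

variable {α : Type*} {m m0 : MeasurableSpace α} {μ : Measure α}

theorem integral_abs_sub_const_le_of_ae_eq_condExp [IsFiniteMeasure μ] (hm : m ≤ m0)
    {f h : α → ℝ} (hh : Integrable h μ) (hf : f =ᵐ[μ] μ[h | m]) (c : ℝ) :
    ∫ x, |f x - c| ∂μ ≤ ∫ x, |h x - c| ∂μ := by
  have hsub : (fun x => f x - c) =ᵐ[μ] μ[fun x => h x - c | m] := by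
    filter_upwards [hf, condExp_sub hh (integrable_const c) m] with x hfx hsubx
    rw [hfx, show (fun x => h x - c) = h - fun _ => c from rfl, hsubx, Pi.sub_apply,
      condExp_const hm c]
  calc ∫ x, |f x - c| ∂μ = ∫ x, |μ[fun x => h x - c | m] x| ∂μ :=
        integral_congr_ae (hsub.mono fun x hx => by simp only [hx])
    _ ≤ ∫ x, |h x - c| ∂μ := integral_abs_condExp_le _

end

theorem integral_abs_sub_prod_le_of_forall_integral_abs_sub_const_le {E : Type*}
    [MeasurableSpace E] {ν : Measure E} [IsFiniteMeasure ν] {f h : E → ℝ}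
    (hf : Integrable f ν) (hh : Integrable h ν)
    (hle : ∀ c : ℝ, ∫ x, |f x - c| ∂ν ≤ ∫ x, |h x - c| ∂ν) :
    ∫ p, |f p.1 - f p.2| ∂(ν.prod ν) ≤ ∫ p, |h p.1 - h p.2| ∂(ν.prod ν) := by
  have hle' : ∀ c : ℝ, ∫ x, |c - f x| ∂ν ≤ ∫ x, |c - h x| ∂ν := fun c => by
    simpa only [abs_sub_comm c] using hle c
  have hint : ∀ {u v : E → ℝ}, Integrable u ν → Integrable v ν →
      Integrable (fun p : E × E => |u p.1 - v p.2|) (ν.prod ν) := fun hu hv =>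
    ((hu.comp_fst ν).sub (hv.comp_snd ν)).abs
  calc ∫ p, |f p.1 - f p.2| ∂(ν.prod ν) = ∫ x, ∫ z, |f x - f z| ∂ν ∂ν :=
        integral_prod _ (hint hf hf)
    _ ≤ ∫ x, ∫ z, |f x - h z| ∂ν ∂ν :=
        integral_mono (hint hf hf).integral_prod_left (hint hf hh).integral_prod_left
          fun x => hle' (f x)
    _ = ∫ z, ∫ x, |f x - h z| ∂ν ∂ν := integral_integral_swap (hint hf hh)
    _ ≤ ∫ z, ∫ x, |h x - h z| ∂ν ∂ν :=
        integral_mono (hint hf hh).integral_prod_right (hint hh hh).integral_prod_right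
          fun z => hle (h z)
    _ = ∫ p, |h p.1 - h p.2| ∂(ν.prod ν) := (integral_prod_symm _ (hint hh hh)).symm

theorem ProbabilityTheory.IndepFun.integral_comp_eq_integral_prod_map {Ω E G : Type*} [MeasurableSpace Ω]
    [MeasurableSpace E] [NormedAddCommGroup G] [NormedSpace ℝ G] {P : Measure Ω}
    [IsFiniteMeasure P] {X Z : Ω → E} (hindep : IndepFun X Z P) (hid : IdentDistrib X Z P P)
    {F : E × E → G} (hF : AEStronglyMeasurable F ((P.map X).prod (P.map X))) :
    ∫ ω, F (X ω, Z ω) ∂P = ∫ p, F p ∂((P.map X).prod (P.map X)) := by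
  have hlaw : P.map (fun ω => (X ω, Z ω)) = (P.map X).prod (P.map X) := by
    rw [(indepFun_iff_map_prod_eq_prod_map_map hid.aemeasurable_fst
      hid.aemeasurable_snd).mp hindep, hid.map_eq]
  rw [← hlaw] at hF ⊢
  exact (integral_map (hid.aemeasurable_fst.prodMk hid.aemeasurable_snd) hF).symm

theorem Gini_numerator_maximized_by_true_regression_general
    {Ω E : Type*} [MeasurableSpace Ω] [MeasurableSpace E]
    (P : Measure Ω) [IsProbabilityMeasure P]
    (X Z : Ω → E) (Y : Ω → ℝ)
    (hX : Measurable X)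
    (hindep : IndepFun X Z P) (hid : IdentDistrib X Z P P)
    -- μ† as a measurable function of the covariates, a version of E[Y|X]:
    (gdag : E → ℝ) (hgdag : Measurable gdag)
    (hver : (fun ω => gdag (X ω)) =ᵐ[P] P[Y | MeasurableSpace.comap X inferInstance])
    -- μ̂ as a measurable function of the covariates, auto-calibrated for Y:
    (g : E → ℝ) (hg : Measurable g)
    (hauto : P[Y | MeasurableSpace.comap (fun ω => g (X ω)) Real.measurableSpace]
      =ᵐ[P] fun ω => g (X ω)) :
    (∫ ω, |g (X ω) - g (Z ω)| ∂P) ≤ ∫ ω, |gdag (X ω) - gdag (Z ω)| ∂P := by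
  have hσ : MeasurableSpace.comap (fun ω => g (X ω)) Real.measurableSpace
      ≤ MeasurableSpace.comap X inferInstance := by
    rw [show (fun ω => g (X ω)) = g ∘ X from rfl, ← MeasurableSpace.comap_comp]
    exact MeasurableSpace.comap_mono hg.comap_le
  have hcalib : (fun ω => g (X ω))
      =ᵐ[P] P[fun ω => gdag (X ω) | MeasurableSpace.comap (fun ω => g (X ω)) Real.measurableSpace] :=
    hauto.symm.trans ((condExp_congr_ae hver).trans (condExp_condExp_of_le hσ hX.comap_le)).symm
  have hint_map : ∀ {u : E → ℝ}, Measurable u → Integrable (fun ω => u (X ω)) P →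
      Integrable u (P.map X) := fun hu h =>
    (integrable_map_measure hu.aestronglyMeasurable hX.aemeasurable).mpr h
  have hgdagX : Integrable (fun ω => gdag (X ω)) P := integrable_condExp.congr hver.symm
  have hgX : Integrable (fun ω => g (X ω)) P := integrable_condExp.congr hauto
  rw [hindep.integral_comp_eq_integral_prod_map hid (F := fun p => |g p.1 - g p.2|) (by fun_prop),
    hindep.integral_comp_eq_integral_prod_map hid (F := fun p => |gdag p.1 - gdag p.2|)
      (by fun_prop)]
  refine integral_abs_sub_prod_le_of_forall_integral_abs_sub_const_le
    (hint_map hg hgX) (hint_map hgdag hgdagX) fun c => ?_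
  rw [integral_map hX.aemeasurable (by fun_prop), integral_map hX.aemeasurable (by fun_prop)]
  exact integral_abs_sub_const_le_of_ae_eq_condExp (hg.comp hX).comap_le hgdagX hcalib c

/-- Let `μ̂(X)` be auto-calibrated for `Y`, `μ†(X) = E[Y|X]`, and `Z` an independent copy
of `X`. Then `E[|μ̂(X) − μ̂(Z)|] ≤ E[|μ†(X) − μ†(Z)|]`: the economic Gini numerator is
maximized by the true regression function among auto-calibrated regression functions. -/
theorem Gini_numerator_maximized_by_true_regression
    {Ω E : Type*} [MeasurableSpace Ω] [MeasurableSpace E]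
    (P : Measure Ω) [IsProbabilityMeasure P]
    (X Z : Ω → E) (Y : Ω → ℝ)
    (hX : Measurable X) (hZ : Measurable Z) (hY : Integrable Y P)
    (hindep : IndepFun X Z P) (hid : IdentDistrib X Z P P)
    -- μ† as a measurable function of the covariates, a version of E[Y|X]:
    (gdag : E → ℝ) (hgdag : Measurable gdag)
    (hver : (fun ω => gdag (X ω)) =ᵐ[P] P[Y | MeasurableSpace.comap X inferInstance])
    -- μ̂ as a measurable function of the covariates, auto-calibrated for Y:
    (g : E → ℝ) (hg : Measurable g)
    (hauto : P[Y | MeasurableSpace.comap (fun ω => g (X ω)) Real.measurableSpace]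
      =ᵐ[P] fun ω => g (X ω))
    (hint1 : Integrable (fun ω => |g (X ω) - g (Z ω)|) P)
    (hint2 : Integrable (fun ω => |gdag (X ω) - gdag (Z ω)|) P) :
    (∫ ω, |g (X ω) - g (Z ω)| ∂P) ≤ ∫ ω, |gdag (X ω) - gdag (Z ω)| ∂P :=
  Gini_numerator_maximized_by_true_regression_general P X Z Y hX hindep hid gdag hgdag hver g hg
    hauto
end

section
/- Let μ̂(X) be auto-calibrated for Y with μ†(X) = E[Y|X], and let Z be an independent copy of X. If E[|μ̂(X) − μ̂(Z)|] = E[|μ†(X) − μ†(Z)|], then μ̂(X) = μ†(X) almost surely. Consequently, the Gini index gives a strictly consistent scoring rule on the class of auto-calibrated regression functions: G^ML_{Y,μ†(X)} > G^ML_{Y,μ̂(X)} unless μ̂(X) = μ†(X) a.s. -/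
/-!
Write `s` for the sign function and `k t = E[s(t - μ̂(Z))]`. Fubini and the symmetry
`(X, Z) ↔ (Z, X)` give `E[(f(X) - f(Z)) s(μ̂(X) - μ̂(Z))] = 2 E[f(X) k(μ̂(X))]` for integrable `f`.
Since `μ̂(X) = E[μ†(X) | μ̂(X)]` by the tower property, `μ†` may be replaced by `μ̂` on the right,
so `E|μ̂(X) - μ̂(Z)| = E[(μ†(X) - μ†(Z)) s(μ̂(X) - μ̂(Z))] ≤ E|μ†(X) - μ†(Z)|`.
Equality forces `μ̂(X) ≤ μ̂(Z) → μ†(X) ≤ μ†(Z)` almost surely, which makes `μ†` almost surely a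
measurable function `w` of `μ̂`; testing calibration against `s(w(μ̂) - μ̂)` then gives
`E|μ†(X) - μ̂(X)| = 0`.
-/

open MeasureTheory ProbabilityTheory

namespace Real

lemma measurable_sign : Measurable Real.sign :=
  Measurable.ite measurableSet_Iio measurable_const <|
    Measurable.ite measurableSet_Ioi measurable_const measurable_const

lemma abs_sign_le_one (r : ℝ) : |Real.sign r| ≤ 1 := by
  rcases sign_apply_eq r with h | h | h <;> simp [h]

lemma self_mul_sign (r : ℝ) : r * Real.sign r = |r| := by
  rcases lt_trichotomy r 0 with h | rfl | h
  · rw [sign_of_neg h, abs_of_neg h, mul_neg_one]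
  · simp
  · rw [sign_of_pos h, abs_of_pos h, mul_one]

lemma mul_sign_le_abs (a b : ℝ) : a * Real.sign b ≤ |a| :=
  calc a * Real.sign b ≤ |a| * |Real.sign b| := abs_mul a _ ▸ le_abs_self _
    _ ≤ |a| := mul_le_of_le_one_right (abs_nonneg a) (abs_sign_le_one b)

lemma nonpos_of_mul_sign_eq_abs {a b : ℝ} (h : a * Real.sign b = |a|) (hb : b ≤ 0) : a ≤ 0 := by
  rcases hb.lt_or_eq with hb | rfl
  · rw [sign_of_neg hb, mul_neg_one] at h
    exact abs_eq_neg_self.mp h.symm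
  · rw [sign_zero, mul_zero] at h
    exact (abs_eq_zero.mp h.symm).le

end Real

lemma MeasureTheory.Integrable.mul_sign {α : Type*} [MeasurableSpace α] {μ : Measure α}
    {F s : α → ℝ} (hF : Integrable F μ) (hs : Measurable s) :
    Integrable (fun x => F x * Real.sign (s x)) μ :=
  hF.mul_bdd (Real.measurable_sign.comp hs).aestronglyMeasurable
    (ae_of_all _ fun x => Real.abs_sign_le_one (s x))

section Gini

variable {E : Type*} [MeasurableSpace E] {ν : Measure E} {g d : E → ℝ}

noncomputable def meanSign (ν : Measure E) (g : E → ℝ) (t : ℝ) : ℝ :=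
  ∫ y, Real.sign (t - g y) ∂ν

lemma measurable_meanSign [SFinite ν] (hg : Measurable g) : Measurable (meanSign ν g) :=
  (Real.measurable_sign.comp (measurable_fst.sub (hg.comp measurable_snd))).stronglyMeasurable
    |>.integral_prod_right' (f := fun p : ℝ × E => Real.sign (p.1 - g p.2)) |>.measurable

lemma abs_meanSign_le_one [IsProbabilityMeasure ν] (g : E → ℝ) (t : ℝ) : |meanSign ν g t| ≤ 1 := by
  simpa [meanSign] using norm_integral_le_of_norm_le_const (μ := ν)
    (f := fun y => Real.sign (t - g y)) (C := 1)
    (ae_of_all _ fun y => Real.abs_sign_le_one (t - g y))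

lemma integral_prod_sub_mul_sign_eq_two_mul [IsFiniteMeasure ν] (hg : Measurable g) {f : E → ℝ}
    (hf : Integrable f ν) :
    ∫ p, (f p.1 - f p.2) * Real.sign (g p.1 - g p.2) ∂ν.prod ν =
      2 * ∫ x, f x * meanSign ν g (g x) ∂ν := by
  have hgg : Measurable fun p : E × E => g p.1 - g p.2 := by fun_prop
  have hint : Integrable (fun p : E × E => f p.1 * Real.sign (g p.1 - g p.2)) (ν.prod ν) :=
    (hf.comp_fst ν).mul_sign hgg
  have hswap : ∫ p, f p.2 * Real.sign (g p.1 - g p.2) ∂ν.prod ν =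
      -∫ p, f p.1 * Real.sign (g p.1 - g p.2) ∂ν.prod ν := by
    rw [← integral_prod_swap, ← integral_neg]
    congr 1 with p
    rw [Prod.fst_swap, Prod.snd_swap, ← neg_sub, Real.sign_neg, mul_neg]
  have hfst : ∫ p, f p.1 * Real.sign (g p.1 - g p.2) ∂ν.prod ν =
      ∫ x, f x * meanSign ν g (g x) ∂ν := by
    rw [integral_prod _ hint]
    simp only [integral_const_mul, meanSign]
  simp only [sub_mul]
  rw [integral_sub hint ((hf.comp_snd ν).mul_sign hgg), hswap, hfst]
  ring

lemma measure_eq_zero_of_forall_measure_setOf_le_eq_zero [SFinite ν] (hg : Measurable g)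
    {C : Set E} (hC : MeasurableSet C) (hnull : ∀ x ∈ C, ν {y ∈ C | g x ≤ g y} = 0) :
    ν C = 0 := by
  set S : Set (E × E) := {p | p.1 ∈ C ∧ p.2 ∈ C ∧ g p.1 ≤ g p.2}
  have hS : MeasurableSet S := (hC.preimage measurable_fst).inter
    ((hC.preimage measurable_snd).inter
      (measurableSet_le (hg.comp measurable_fst) (hg.comp measurable_snd)))
  have hS0 : ν.prod ν S = 0 := by
    rw [Measure.measure_prod_null hS]
    refine ae_of_all _ fun x => ?_
    by_cases hx : x ∈ C
    · simpa [S, hx] using hnull x hx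
    · simp [S, hx]
  have hswap : ν.prod ν (Prod.swap ⁻¹' S) = 0 := by
    rw [← Measure.map_apply measurable_swap hS, Measure.prod_swap, hS0]
  -- `C ×ˢ C` is covered by `S` and its mirror image, both null by Fubini
  have hCC : ν C * ν C = 0 := by
    rw [← Measure.prod_prod]
    refine measure_mono_null ?_ (measure_union_null hS0 hswap)
    rintro ⟨x, y⟩ ⟨hx, hy⟩
    rcases le_total (g x) (g y) with h | h
    · exact Or.inl ⟨hx, hy, h⟩
    · exact Or.inr ⟨hy, hx, h⟩
  simpa using hCC

lemma exists_measurable_ae_eq_comp_of_ae_monotone [SFinite ν] (hg : Measurable g)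
    (hd : Measurable d) (hmono : ∀ᵐ p ∂ν.prod ν, g p.1 ≤ g p.2 → d p.1 ≤ d p.2) :
    ∃ w : ℝ → ℝ, Measurable w ∧ d =ᵐ[ν] fun x => w (g x) := by
  -- the monotone envelope `t ↦ ess inf {d y | t ≤ g y}`, in `EReal` so that it always exists
  set h : ℝ → EReal := fun t => essInf (fun x => (d x : EReal)) (ν.restrict {x | t ≤ g x})
  have hh : Monotone h := fun s t hst => essInf_antitone_measure <|
    Measure.absolutelyContinuous_of_le <| Measure.restrict_mono (fun x hx => hst.trans hx) le_rfl
  have hle : ∀ᵐ x ∂ν, (d x : EReal) ≤ h (g x) := by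
    filter_upwards [Measure.ae_ae_of_ae_prod hmono] with x hx
    refine le_essInf_of_ae_le _ ?_
    filter_upwards [ae_restrict_of_ae hx, ae_restrict_mem (measurableSet_le measurable_const hg)]
      with y hxy hy
    exact EReal.coe_le_coe_iff.mpr (hxy hy)
  have hlevel : ∀ q : ℚ, ν {x | (d x : EReal) < (q : ℝ) ∧ ((q : ℝ) : EReal) ≤ h (g x)} = 0 := by
    intro q
    refine measure_eq_zero_of_forall_measure_setOf_le_eq_zero hg
      ((measurableSet_lt hd.coe_real_ereal measurable_const).inter
        (measurableSet_le measurable_const (hh.measurable.comp hg))) fun x hx => ?_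
    have hlt : (ν.restrict {y | g x ≤ g y}) {y | (d y : EReal) < h (g x)} = 0 :=
      meas_lt_essInf
    rw [Measure.restrict_apply' (measurableSet_le measurable_const hg)] at hlt
    refine measure_mono_null (fun y hy => ?_) hlt
    exact ⟨hy.1.1.trans_le hx.2, hy.2⟩
  have hge : ∀ᵐ x ∂ν, h (g x) ≤ d x := by
    refine measure_mono_null (fun x hx => ?_) (measure_iUnion_null hlevel)
    obtain ⟨q, hq1, hq2⟩ := EReal.lt_iff_exists_rat_btwn.mp (not_le.mp hx)
    exact Set.mem_iUnion.mpr ⟨q, hq1, hq2.le⟩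
  refine ⟨fun t => (h t).toReal, hh.measurable.ereal_toReal, ?_⟩
  filter_upwards [hle, hge] with x h1 h2
  rw [← le_antisymm h1 h2, EReal.toReal_coe]

/-- `g` is calibrated for `d`: the weak form of `ν[d | σ(g)] = g`, tested against bounded
measurable functions of `g`. -/
def IsAutoCalibrated (ν : Measure E) (g d : E → ℝ) : Prop :=
  ∀ k : ℝ → ℝ, Measurable k → (∀ t, |k t| ≤ 1) → ∫ x, (d x - g x) * k (g x) ∂ν = 0

namespace IsAutoCalibrated

lemma integral_mul_comp_eq (h : IsAutoCalibrated ν g d) (hg : Measurable g)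
    (hgi : Integrable g ν) (hdi : Integrable d ν) {k : ℝ → ℝ} (hk : Measurable k)
    (hk1 : ∀ t, |k t| ≤ 1) :
    ∫ x, d x * k (g x) ∂ν = ∫ x, g x * k (g x) ∂ν := by
  have hkg : AEStronglyMeasurable (fun x => k (g x)) ν := (hk.comp hg).aestronglyMeasurable
  have hbound : ∀ᵐ x ∂ν, ‖k (g x)‖ ≤ 1 := ae_of_all _ fun x => hk1 (g x)
  rw [← sub_eq_zero, ← integral_sub (hdi.mul_bdd hkg hbound) (hgi.mul_bdd hkg hbound)]
  simpa only [sub_mul] using h k hk hk1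

lemma ae_eq_of_ae_eq_comp (h : IsAutoCalibrated ν g d) (hgi : Integrable g ν)
    (hdi : Integrable d ν) {w : ℝ → ℝ} (hw : Measurable w) (hdw : d =ᵐ[ν] fun x => w (g x)) :
    g =ᵐ[ν] d := by
  have hsign := h (fun t => Real.sign (w t - t)) (Real.measurable_sign.comp (hw.sub measurable_id))
    fun t => Real.abs_sign_le_one _
  have habs : ∫ x, |d x - g x| ∂ν = 0 := by
    rw [← hsign]
    refine integral_congr_ae ?_
    filter_upwards [hdw] with x hx
    rw [← hx, Real.self_mul_sign]
  filter_upwards [(integral_eq_zero_iff_of_nonneg (fun x => abs_nonneg _)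
    (hdi.sub hgi).abs).mp habs] with x hx
  exact (sub_eq_zero.mp (abs_eq_zero.mp hx)).symm

variable [IsProbabilityMeasure ν]

lemma integral_prod_sub_mul_sign (h : IsAutoCalibrated ν g d) (hg : Measurable g)
    (hgi : Integrable g ν) (hdi : Integrable d ν) :
    ∫ p, (d p.1 - d p.2) * Real.sign (g p.1 - g p.2) ∂ν.prod ν =
      ∫ p, |g p.1 - g p.2| ∂ν.prod ν := by
  rw [integral_prod_sub_mul_sign_eq_two_mul hg hdi, h.integral_mul_comp_eq hg hgi hdi
    (measurable_meanSign hg) (abs_meanSign_le_one g),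
    ← integral_prod_sub_mul_sign_eq_two_mul hg hgi]
  simp only [Real.self_mul_sign]

lemma integral_abs_sub_le (h : IsAutoCalibrated ν g d) (hg : Measurable g)
    (hgi : Integrable g ν) (hdi : Integrable d ν) :
    ∫ p, |g p.1 - g p.2| ∂ν.prod ν ≤ ∫ p, |d p.1 - d p.2| ∂ν.prod ν := by
  have hdiff : Integrable (fun p : E × E => d p.1 - d p.2) (ν.prod ν) :=
    (hdi.comp_fst ν).sub (hdi.comp_snd ν)
  rw [← h.integral_prod_sub_mul_sign hg hgi hdi]
  exact integral_mono (hdiff.mul_sign (by fun_prop)) hdiff.abs fun p => Real.mul_sign_le_abs _ _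

lemma ae_monotone_of_integral_abs_sub_eq (h : IsAutoCalibrated ν g d) (hg : Measurable g)
    (hgi : Integrable g ν) (hdi : Integrable d ν)
    (heq : ∫ p, |g p.1 - g p.2| ∂ν.prod ν = ∫ p, |d p.1 - d p.2| ∂ν.prod ν) :
    ∀ᵐ p ∂ν.prod ν, g p.1 ≤ g p.2 → d p.1 ≤ d p.2 := by
  have hdiff : Integrable (fun p : E × E => d p.1 - d p.2) (ν.prod ν) :=
    (hdi.comp_fst ν).sub (hdi.comp_snd ν)
  have hcross : Integrable (fun p : E × E => (d p.1 - d p.2) * Real.sign (g p.1 - g p.2))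
      (ν.prod ν) := hdiff.mul_sign (by fun_prop)
  have hgap : (fun p : E × E => |d p.1 - d p.2| - (d p.1 - d p.2) * Real.sign (g p.1 - g p.2))
      =ᵐ[ν.prod ν] 0 := by
    refine (integral_eq_zero_iff_of_nonneg (fun p => sub_nonneg.mpr (Real.mul_sign_le_abs _ _))
      (hdiff.abs.sub hcross)).mp ?_
    rw [integral_sub hdiff.abs hcross, h.integral_prod_sub_mul_sign hg hgi hdi, heq, sub_self]
  filter_upwards [hgap] with p hp hle
  exact sub_nonpos.mp <|
    Real.nonpos_of_mul_sign_eq_abs (sub_eq_zero.mp hp).symm (sub_nonpos.mpr hle)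

lemma ae_eq_of_integral_abs_sub_eq (h : IsAutoCalibrated ν g d)
    (hg : Measurable g) (hd : Measurable d) (hgi : Integrable g ν) (hdi : Integrable d ν)
    (heq : ∫ p, |g p.1 - g p.2| ∂ν.prod ν = ∫ p, |d p.1 - d p.2| ∂ν.prod ν) : g =ᵐ[ν] d := by
  obtain ⟨w, hw, hdw⟩ := exists_measurable_ae_eq_comp_of_ae_monotone hg hd
    (h.ae_monotone_of_integral_abs_sub_eq hg hgi hdi heq)
  exact h.ae_eq_of_ae_eq_comp hgi hdi hw hdw

end IsAutoCalibrated

end Gini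

lemma integral_sub_condExp_mul_eq_zero {Ω : Type*} {m m₀ : MeasurableSpace Ω} {μ : Measure Ω}
    [IsFiniteMeasure μ] (hm : m ≤ m₀) {f ξ : Ω → ℝ} (hf : Integrable f μ)
    (hξ : StronglyMeasurable[m] ξ) {C : ℝ} (hξC : ∀ ω, |ξ ω| ≤ C) :
    ∫ ω, (f ω - μ[f | m] ω) * ξ ω ∂μ = 0 := by
  have hfξ : Integrable (fun ω => f ω * ξ ω) μ :=
    hf.mul_bdd (hξ.mono hm).aestronglyMeasurable (ae_of_all _ hξC)
  have hcondξ : Integrable (fun ω => μ[f | m] ω * ξ ω) μ :=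
    integrable_condExp.mul_bdd (hξ.mono hm).aestronglyMeasurable (ae_of_all _ hξC)
  have hpull : ∫ ω, f ω * ξ ω ∂μ = ∫ ω, μ[f | m] ω * ξ ω ∂μ := by
    rw [← integral_condExp hm]
    exact integral_congr_ae (condExp_mul_of_stronglyMeasurable_right hξ hfξ hf)
  simp only [sub_mul]
  rw [integral_sub hfξ hcondξ, hpull, sub_self]

lemma isAutoCalibrated_map_of_condExp {Ω E : Type*} {m₀ : MeasurableSpace Ω} [MeasurableSpace E]
    {P : Measure Ω} [IsFiniteMeasure P] {X : Ω → E} {Y : Ω → ℝ} {g d : E → ℝ}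
    (hX : Measurable X) (hg : Measurable g) (hd : Measurable d)
    (hver : (fun ω => d (X ω)) =ᵐ[P] P[Y | MeasurableSpace.comap X inferInstance])
    (hauto : P[Y | MeasurableSpace.comap (fun ω => g (X ω)) inferInstance]
      =ᵐ[P] fun ω => g (X ω)) :
    IsAutoCalibrated (P.map X) g d := by
  set G := MeasurableSpace.comap (fun ω => g (X ω)) Real.measurableSpace
  have hGX : G ≤ MeasurableSpace.comap X inferInstance := (hg.comp (comap_measurable X)).comap_le
  have hcal : P[fun ω => d (X ω) | G] =ᵐ[P] fun ω => g (X ω) :=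
    (condExp_congr_ae hver).trans <| (condExp_condExp_of_le hGX hX.comap_le).trans hauto
  intro k hk hk1
  rw [integral_map hX.aemeasurable (by fun_prop)]
  rw [← integral_sub_condExp_mul_eq_zero (hGX.trans hX.comap_le)
    (integrable_condExp.congr hver.symm) (hk.comp (comap_measurable _)).stronglyMeasurable
    fun ω => hk1 (g (X ω))]
  refine integral_congr_ae ?_
  filter_upwards [hcal] with ω hω
  rw [hω]
  rfl

theorem Gini_strictly_consistent_under_auto_calibration_general
    {Ω E : Type*} [MeasurableSpace Ω] [MeasurableSpace E]
    (P : Measure Ω) [IsProbabilityMeasure P]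
    (X Z : Ω → E) (Y : Ω → ℝ)
    (hX : Measurable X) (hZ : Measurable Z)
    (hEY : 0 < ∫ ω, Y ω ∂P)
    (hindep : IndepFun X Z P) (hid : IdentDistrib X Z P P)
    -- μ† as a measurable function of the covariates, a version of E[Y|X]:
    (gdag : E → ℝ) (hgdag : Measurable gdag)
    (hver : (fun ω => gdag (X ω)) =ᵐ[P] P[Y | MeasurableSpace.comap X inferInstance])
    -- μ̂ as a measurable function of the covariates, auto-calibrated for Y:
    (g : E → ℝ) (hg : Measurable g)
    (hauto : P[Y | MeasurableSpace.comap (fun ω => g (X ω)) Real.measurableSpace]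
      =ᵐ[P] fun ω => g (X ω))
    -- under auto-calibration the ML Gini index is a positive multiple, independent of the
    -- predictor, of the economic Gini numerator:
    (c : ℝ) (hc : 0 < c) (GML : (E → ℝ) → ℝ)
    (hGML : ∀ m : E → ℝ, GML m = c * ((∫ ω, |m (X ω) - m (Z ω)| ∂P) / (2 * ∫ ω, Y ω ∂P))) :
    ((∫ ω, |g (X ω) - g (Z ω)| ∂P) = (∫ ω, |gdag (X ω) - gdag (Z ω)| ∂P) →
      (fun ω => g (X ω)) =ᵐ[P] fun ω => gdag (X ω)) ∧
    (¬ ((fun ω => g (X ω)) =ᵐ[P] fun ω => gdag (X ω)) → GML g < GML gdag) := by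
  set ν := P.map X
  have : IsProbabilityMeasure ν := Measure.isProbabilityMeasure_map hX.aemeasurable
  have hlaw : P.map (fun ω => (X ω, Z ω)) = ν.prod ν := by
    rw [(indepFun_iff_map_prod_eq_prod_map_map hX.aemeasurable hZ.aemeasurable).mp hindep,
      ← hid.map_eq]
  have hgini (m : E → ℝ) (hm : Measurable m) :
      ∫ ω, |m (X ω) - m (Z ω)| ∂P = ∫ p, |m p.1 - m p.2| ∂ν.prod ν := by
    rw [← hlaw, integral_map (hX.prodMk hZ).aemeasurable (by fun_prop)]
  have hcal : IsAutoCalibrated ν g gdag := isAutoCalibrated_map_of_condExp hX hg hgdag hver hauto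
  have hgi : Integrable g ν := (integrable_map_measure hg.aestronglyMeasurable hX.aemeasurable).mpr
    (integrable_condExp.congr hauto)
  have hdi : Integrable gdag ν :=
    (integrable_map_measure hgdag.aestronglyMeasurable hX.aemeasurable).mpr
      (integrable_condExp.congr hver.symm)
  have heq : (∫ ω, |g (X ω) - g (Z ω)| ∂P) = (∫ ω, |gdag (X ω) - gdag (Z ω)| ∂P) →
      (fun ω => g (X ω)) =ᵐ[P] fun ω => gdag (X ω) := fun h =>
    ae_of_ae_map hX.aemeasurable <| hcal.ae_eq_of_integral_abs_sub_eq hg hgdag hgi hdi <| by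
      rwa [← hgini g hg, ← hgini gdag hgdag]
  refine ⟨heq, fun hne => ?_⟩
  have hlt : ∫ ω, |g (X ω) - g (Z ω)| ∂P < ∫ ω, |gdag (X ω) - gdag (Z ω)| ∂P := by
    refine lt_of_le_of_ne ?_ (mt heq hne)
    rw [hgini g hg, hgini gdag hgdag]
    exact hcal.integral_abs_sub_le hg hgi hdi
  rw [hGML, hGML]
  gcongr

/-- Strict consistency of the Gini index under auto-calibration: if `μ̂(X)` is
auto-calibrated for `Y`, `μ†(X) = E[Y|X]`, and `Z` is an independent copy of `X`, then
equality `E[|μ̂(X) − μ̂(Z)|] = E[|μ†(X) − μ†(Z)|]` forces `μ̂(X) = μ†(X)` a.s.;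
consequently `G^ML_{Y,μ†(X)} > G^ML_{Y,μ̂(X)}` unless `μ̂(X) = μ†(X)` a.s., where under
auto-calibration the ML Gini index is the positive multiple (independent of the predictor)
`c` of the economic Gini numerator `E[|m(X) − m(Z)|]/(2 E[Y])`. -/
theorem Gini_strictly_consistent_under_auto_calibration
    {Ω E : Type*} [MeasurableSpace Ω] [MeasurableSpace E]
    (P : Measure Ω) [IsProbabilityMeasure P]
    (X Z : Ω → E) (Y : Ω → ℝ)
    (hX : Measurable X) (hZ : Measurable Z) (hY : Integrable Y P)
    (hYpos : ∀ ω, 0 ≤ Y ω) (hEY : 0 < ∫ ω, Y ω ∂P)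
    (hYnondet : ¬ ∃ cst : ℝ, Y =ᵐ[P] fun _ => cst)
    (hindep : IndepFun X Z P) (hid : IdentDistrib X Z P P)
    -- μ† as a measurable function of the covariates, a version of E[Y|X]:
    (gdag : E → ℝ) (hgdag : Measurable gdag)
    (hver : (fun ω => gdag (X ω)) =ᵐ[P] P[Y | MeasurableSpace.comap X inferInstance])
    -- μ̂ as a measurable function of the covariates, auto-calibrated for Y:
    (g : E → ℝ) (hg : Measurable g)
    (hauto : P[Y | MeasurableSpace.comap (fun ω => g (X ω)) Real.measurableSpace]
      =ᵐ[P] fun ω => g (X ω))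
    (hint1 : Integrable (fun ω => |g (X ω) - g (Z ω)|) P)
    (hint2 : Integrable (fun ω => |gdag (X ω) - gdag (Z ω)|) P)
    -- under auto-calibration the ML Gini index is a positive multiple, independent of the
    -- predictor, of the economic Gini numerator:
    (c : ℝ) (hc : 0 < c) (GML : (E → ℝ) → ℝ)
    (hGML : ∀ m : E → ℝ, GML m = c * ((∫ ω, |m (X ω) - m (Z ω)| ∂P) / (2 * ∫ ω, Y ω ∂P))) :
    ((∫ ω, |g (X ω) - g (Z ω)| ∂P) = (∫ ω, |gdag (X ω) - gdag (Z ω)| ∂P) →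
      (fun ω => g (X ω)) =ᵐ[P] fun ω => gdag (X ω)) ∧
    (¬ ((fun ω => g (X ω)) =ᵐ[P] fun ω => gdag (X ω)) → GML g < GML gdag) :=
  Gini_strictly_consistent_under_auto_calibration_general P X Z Y hX hZ hEY hindep hid gdag hgdag
    hver g hg hauto c hc GML hGML
end

section
/- Let W be a random variable that is not almost surely constant, and let c = E[W]. If z lies strictly between the essential infimum and the essential supremum of W, then, with ψ(m) = |m − z|, one has |E[W] − z| < E[|W − z|]. -/
open MeasureTheory ProbabilityTheory

private lemma le_essInf_aux {Ω : Type*} [MeasurableSpace Ω] (P : Measure Ω)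
    [IsProbabilityMeasure P] (W : Ω → ℝ) (hW : Integrable W P) (z : ℝ)
    (h : ∀ᵐ ω ∂P, z ≤ W ω) : z ≤ essInf W P := by
  have hcb : Filter.IsCoboundedUnder (· ≥ ·) (ae P) W := by
    refine ⟨∫ ω, W ω ∂P, fun a ha => ?_⟩
    have : ∫ ω, (a : ℝ) ∂P ≤ ∫ ω, W ω ∂P :=
      integral_mono_ae (integrable_const a) hW ha
    simpa using this
  exact Filter.le_liminf_of_le hcb h

private lemma essSup_le_aux {Ω : Type*} [MeasurableSpace Ω] (P : Measure Ω)
    [IsProbabilityMeasure P] (W : Ω → ℝ) (hW : Integrable W P) (z : ℝ)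
    (h : ∀ᵐ ω ∂P, W ω ≤ z) : essSup W P ≤ z := by
  have hcb : Filter.IsCoboundedUnder (· ≤ ·) (ae P) W := by
    refine ⟨∫ ω, W ω ∂P, fun a ha => ?_⟩
    have : ∫ ω, W ω ∂P ≤ ∫ ω, (a : ℝ) ∂P :=
      integral_mono_ae hW (integrable_const a) ha
    simpa using this
  exact Filter.limsup_le_of_le hcb h

/-- Strict Jensen inequality for the absolute value at an interior point: if `W` is an
integrable random variable that is not a.s. constant and `z` lies strictly between the
essential infimum and essential supremum of `W`, then `|E[W] − z| < E[|W − z|]`. -/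
theorem strict_jensen_abs_interior
    {Ω : Type*} [MeasurableSpace Ω] (P : Measure Ω) [IsProbabilityMeasure P]
    (W : Ω → ℝ) (hW : Integrable W P)
    (hnondet : ¬ ∃ c : ℝ, W =ᵐ[P] fun _ => c)
    (z : ℝ) (hz1 : essInf W P < z) (hz2 : z < essSup W P) :
    |(∫ ω, W ω ∂P) - z| < ∫ ω, |W ω - z| ∂P := by
  set f : Ω → ℝ := fun ω => W ω - z with hf
  have hfi : Integrable f P := hW.sub (integrable_const z)
  have hfa : Integrable (fun ω => |f ω|) P := hfi.abs
  have hIeq : (∫ ω, W ω ∂P) - z = ∫ ω, f ω ∂P := by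
    rw [integral_sub hW (integrable_const z), integral_const]; simp
  rw [hIeq]
  have hle : |∫ ω, f ω ∂P| ≤ ∫ ω, |f ω| ∂P := by
    simpa [Real.norm_eq_abs] using norm_integral_le_integral_norm (μ := P) f
  rcases lt_or_eq_of_le hle with hlt | heq
  · exact hlt
  · exfalso
    have habs : ∫ ω, f ω ∂P = ∫ ω, |f ω| ∂P ∨ ∫ ω, f ω ∂P = -(∫ ω, |f ω| ∂P) :=
      abs_eq (le_trans (abs_nonneg _) hle) |>.mp heq
    rcases habs with h1 | h1
    · -- then |f| - f has integral 0, nonneg, so f ≥ 0 a.e.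
      have hz : ∫ ω, (|f ω| - f ω) ∂P = 0 := by
        rw [integral_sub hfa hfi, h1]; ring
      have hnn : 0 ≤ᵐ[P] fun ω => |f ω| - f ω := by
        filter_upwards with ω
        simp [le_abs_self, sub_nonneg]
      have hae : (fun ω => |f ω| - f ω) =ᵐ[P] 0 :=
        (integral_eq_zero_iff_of_nonneg_ae hnn (hfa.sub hfi)).mp hz
      have hge : ∀ᵐ ω ∂P, z ≤ W ω := by
        filter_upwards [hae] with ω hω
        have h2 : |f ω| - f ω = 0 := hω
        have h3 : 0 ≤ f ω := by
          have := abs_nonneg (f ω); linarith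
        simpa [hf, sub_nonneg] using h3
      exact absurd (le_essInf_aux P W hW z hge) (not_le.mpr hz1)
    · have hz : ∫ ω, (|f ω| + f ω) ∂P = 0 := by
        rw [integral_add hfa hfi, h1]; ring
      have hnn : 0 ≤ᵐ[P] fun ω => |f ω| + f ω := by
        filter_upwards with ω
        have := neg_abs_le (f ω); simp only [Pi.zero_apply]; linarith
      have hae : (fun ω => |f ω| + f ω) =ᵐ[P] 0 :=
        (integral_eq_zero_iff_of_nonneg_ae hnn (hfa.add hfi)).mp hz
      have hle' : ∀ᵐ ω ∂P, W ω ≤ z := by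
        filter_upwards [hae] with ω hω
        have h2 : |f ω| + f ω = 0 := hω
        have h3 : f ω ≤ 0 := by
          have := abs_nonneg (f ω); linarith
        simpa [hf, sub_nonpos] using h3
      exact absurd (essSup_le_aux P W hW z hle') (not_le.mpr hz2)
end
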